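/- arXiv:2605.27008 — 4 statements merged into one kernel-verified Lean document; each statement's English description precedes it below -/
import Mathlib

section
/- Let $V$ be a finite-dimensional real inner product space of dimension $d$, let $A : V \to V$ be an invertible linear map, and let $1 \le b \le d$. Then the $b$-th smallest singular value satisfies $\sigma_b(A) = \inf_{W} \sup_{u \in W^{\perp}, \|u\|=1} \| P_{(AW)^{\perp}} (A u) \|$, where the infimum runs over all subspaces $W \subseteq V$ of dimension $d-b$, $W^\perp$ denotes the orthogonal complement, and $P_{(AW)^\perp}$ denotes the orthogonal projection onto the orthogonal complement of $AW$. -/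
open Module Submodule Finset

local notation "⟪" x ", " y "⟫" => @inner ℝ _ _ x y

section Aux
variable {V : Type*} [NormedAddCommGroup V] [InnerProductSpace ℝ V]

lemma aux_mem_orthogonal_span {S : Set V} {x : V} (h : ∀ y ∈ S, ⟪y, x⟫ = 0) :
    x ∈ (Submodule.span ℝ S)ᗮ := by
  rw [Submodule.mem_orthogonal]
  intro u hu
  induction hu using Submodule.span_induction with
  | mem y hy => exact h y hy
  | zero => simp
  | add a b _ _ ha hb => rw [inner_add_left, ha, hb, add_zero]
  | smul c a _ ha => rw [real_inner_smul_left, ha, mul_zero]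

variable [FiniteDimensional ℝ V] {d : ℕ}

lemma aux_norm_sq (g : OrthonormalBasis (Fin d) ℝ V) (x : V) :
    ‖x‖ ^ 2 = ∑ i, ⟪g i, x⟫ ^ 2 := by
  rw [← g.repr.norm_map x, EuclideanSpace.norm_eq, Real.sq_sqrt (by positivity)]
  simp [g.repr_apply_apply, sq_abs]

lemma aux_map_norm_sq (g h : OrthonormalBasis (Fin d) ℝ V)
    (B : V →ₗ[ℝ] V) (σ : Fin d → ℝ) (hB : ∀ i, B (g i) = σ i • h i) (x : V) :
    ‖B x‖ ^ 2 = ∑ i, (σ i) ^ 2 * ⟪g i, x⟫ ^ 2 := by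
  have horth := orthonormal_iff_ite.mp h.orthonormal
  have hrep : ∀ j, ⟪h j, B x⟫ = σ j * ⟪g j, x⟫ := by
    intro j
    conv_lhs => rw [← g.sum_repr' x]
    rw [map_sum, inner_sum]
    rw [Finset.sum_eq_single j]
    · rw [map_smul, hB, real_inner_smul_right, real_inner_smul_right, horth]
      simp [mul_comm]
    · intro i _ hij
      rw [map_smul, hB, real_inner_smul_right, real_inner_smul_right, horth]
      simp [Ne.symm hij]
    · simp
  rw [aux_norm_sq h]
  apply Finset.sum_congr rfl
  intro i _
  rw [hrep]
  ring

lemma aux_proj_norm_le (K : Submodule ℝ V) (x : V) :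
    ‖(orthogonalProjection K x : V)‖ ≤ ‖x‖ := by
  calc ‖(orthogonalProjection K x : V)‖ = ‖orthogonalProjection K x‖ := rfl
    _ ≤ ‖orthogonalProjection K‖ * ‖x‖ := (orthogonalProjection K).le_opNorm x
    _ ≤ 1 * ‖x‖ := mul_le_mul_of_nonneg_right (orthogonalProjection_norm_le K) (norm_nonneg x)
    _ = ‖x‖ := one_mul _

end Aux

set_option maxHeartbeats 1000000 in
/-- **Variational characterization of singular values via projections (inf-sup form).**
Let `V` be a `d`-dimensional real inner product space, `A : V → V` an invertible linear
map whose singular values, in increasing order, are `σ 0 ≤ ⋯ ≤ σ (d-1)` (encoded by a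
singular value decomposition `A (e i) = σ i • f i` with orthonormal bases `e`, `f` and
`σ` monotone positive). Then for `1 ≤ b ≤ d`, the `b`-th smallest singular value equals
the infimum over subspaces `W` of dimension `d - b` of the supremum, over unit vectors
`u ∈ Wᗮ`, of `‖P_{(A W)ᗮ} (A u)‖`. -/
theorem stmt1 {V : Type*} [NormedAddCommGroup V] [InnerProductSpace ℝ V]
    [FiniteDimensional ℝ V] {d : ℕ} (hd : Module.finrank ℝ V = d)
    (A : V →ₗ[ℝ] V) (hA : Function.Bijective A)
    (σ : Fin d → ℝ) (hσpos : ∀ i, 0 < σ i) (hσmono : Monotone σ)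
    (e f : OrthonormalBasis (Fin d) ℝ V)
    (hSVD : ∀ i, A (e i) = σ i • f i)
    (b : ℕ) (hb1 : 1 ≤ b) (hbd : b ≤ d) :
    σ ⟨b - 1, by omega⟩ =
      ⨅ W : {W : Submodule ℝ V // Module.finrank ℝ W = d - b},
        ⨆ u : {u : V // u ∈ (W.1)ᗮ ∧ ‖u‖ = 1},
          ‖(Submodule.orthogonalProjectionOnto (Submodule.map A W.1)ᗮ (A u.1) : V)‖ := by
  have hd1 : 1 ≤ d := hb1.trans hbd
  set b1 : Fin d := ⟨b - 1, by omega⟩ with hb1def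
  -- adjoint SVD
  have hadj : ∀ i, (LinearMap.adjoint A) (f i) = σ i • e i := by
    intro i
    apply e.repr.injective
    ext j
    have hf := orthonormal_iff_ite.mp f.orthonormal
    have he := orthonormal_iff_ite.mp e.orthonormal
    simp only [e.repr_apply_apply]
    rw [real_inner_comm, LinearMap.adjoint_inner_left, hSVD, real_inner_smul_right,
      real_inner_smul_right, hf, he]
    rcases eq_or_ne i j with rfl | hij
    · simp
    · simp [hij, Ne.symm hij]
  -- the specific subspace W₀ for the upper bound
  have hW0li : LinearIndependent ℝ (fun j : Fin (d - b) => e ⟨b + j.1, by omega⟩) := by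
    exact e.orthonormal.linearIndependent.comp
      (fun j : Fin (d - b) => (⟨b + j.1, by omega⟩ : Fin d))
      (fun j k h => by ext; have := Fin.mk.injEq _ _ _ _ ▸ h; omega)
  set W0 : Submodule ℝ V :=
    Submodule.span ℝ (Set.range fun j : Fin (d - b) => e ⟨b + j.1, by omega⟩) with hW0
  have hW0rank : finrank ℝ W0 = d - b := by
    rw [hW0, finrank_span_eq_card hW0li, Fintype.card_fin]
  -- lower bound: for every admissible W, σ b1 is ≤ the sup
  have lower : ∀ W : Submodule ℝ V, finrank ℝ W = d - b →
      ∃ u : V, u ∈ Wᗮ ∧ ‖u‖ = 1 ∧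
        σ b1 ≤ ‖(orthogonalProjection (Submodule.map A W)ᗮ (A u) : V)‖ := by
    intro W hW
    set F : Submodule ℝ V :=
      Submodule.span ℝ (Set.range fun j : Fin (d - (b - 1)) => f ⟨b - 1 + j.1, by omega⟩)
      with hFdef
    have hFli : LinearIndependent ℝ (fun j : Fin (d - (b - 1)) => f ⟨b - 1 + j.1, by omega⟩) :=
      f.orthonormal.linearIndependent.comp
        (fun j : Fin (d - (b - 1)) => (⟨b - 1 + j.1, by omega⟩ : Fin d))
        (fun j k h => by ext; have := Fin.mk.injEq _ _ _ _ ▸ h; omega)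
    have hFrank : finrank ℝ F = d - (b - 1) := by
      rw [hFdef, finrank_span_eq_card hFli, Fintype.card_fin]
    have hmap : finrank ℝ (Submodule.map A W) = d - b := by
      have h1 : Submodule.map A W
          = Submodule.map (LinearEquiv.ofBijective A hA : V →ₗ[ℝ] V) W := rfl
      rw [h1, LinearEquiv.finrank_map_eq, hW]
    have horthrank : finrank ℝ ((Submodule.map A W)ᗮ) = b := by
      have := Submodule.finrank_add_finrank_orthogonal (Submodule.map A W)
      rw [hmap, hd] at this
      omega
    have hinfpos : 0 < finrank ℝ ((Submodule.map A W)ᗮ ⊓ F : Submodule ℝ V) := by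
      have h1 := Submodule.finrank_sup_add_finrank_inf_eq (Submodule.map A W)ᗮ F
      have h2 : finrank ℝ ((Submodule.map A W)ᗮ ⊔ F : Submodule ℝ V) ≤ d :=
        hd ▸ Submodule.finrank_le _
      rw [horthrank, hFrank] at h1
      omega
    obtain ⟨v, hvmem, hv0⟩ :=
      Submodule.exists_mem_ne_zero_of_ne_bot (p := (Submodule.map A W)ᗮ ⊓ F) (by
        intro hbot
        rw [hbot, finrank_bot] at hinfpos
        omega)
    set vn : V := ‖v‖⁻¹ • v with hvn
    have hvnnorm : ‖vn‖ = 1 := norm_smul_inv_norm hv0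
    have hvnorthmem : vn ∈ (Submodule.map A W)ᗮ :=
      Submodule.smul_mem _ _ ((Submodule.mem_inf.mp hvmem).1)
    have hvnF : vn ∈ F := Submodule.smul_mem _ _ ((Submodule.mem_inf.mp hvmem).2)
    -- coordinates of vn below b-1 vanish
    have hcoord : ∀ i : Fin d, i.1 < b - 1 → ⟪f i, vn⟫ = 0 := by
      intro i hi
      have hfi : f i ∈ Fᗮ := by
        apply aux_mem_orthogonal_span
        rintro y ⟨j, rfl⟩
        have := orthonormal_iff_ite.mp f.orthonormal ⟨b - 1 + j.1, by omega⟩ i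
        rw [this, if_neg (by intro h; have := Fin.mk.injEq _ _ _ _ ▸ h; omega)]
      rw [real_inner_comm]
      exact Submodule.inner_right_of_mem_orthogonal hvnF hfi
    -- norm of adjoint applied to vn
    have hAadjnorm : σ b1 ≤ ‖(LinearMap.adjoint A) vn‖ := by
      have hsq : σ b1 ^ 2 ≤ ‖(LinearMap.adjoint A) vn‖ ^ 2 := by
        rw [aux_map_norm_sq f e (LinearMap.adjoint A) σ hadj vn]
        calc σ b1 ^ 2 = σ b1 ^ 2 * ‖vn‖ ^ 2 := by rw [hvnnorm]; ring
          _ = σ b1 ^ 2 * ∑ i, ⟪f i, vn⟫ ^ 2 := by rw [aux_norm_sq f vn]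
          _ = ∑ i, σ b1 ^ 2 * ⟪f i, vn⟫ ^ 2 := by rw [Finset.mul_sum]
          _ ≤ ∑ i, σ i ^ 2 * ⟪f i, vn⟫ ^ 2 := by
              apply Finset.sum_le_sum
              intro i _
              rcases lt_or_ge i.1 (b - 1) with hi | hi
              · rw [hcoord i hi]; ring_nf; exact le_refl _
              · have hle : σ b1 ≤ σ i := hσmono (by rw [Fin.le_def]; exact hi)
                have h0 : (0:ℝ) ≤ σ b1 := (hσpos b1).le
                have hsq2 : σ b1 ^ 2 ≤ σ i ^ 2 := by nlinarith
                exact mul_le_mul_of_nonneg_right hsq2 (sq_nonneg _)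
      have h0 : (0:ℝ) ≤ σ b1 := (hσpos b1).le
      nlinarith [norm_nonneg ((LinearMap.adjoint A) vn)]
    have hAvne : (LinearMap.adjoint A) vn ≠ 0 := by
      intro h
      rw [h, norm_zero] at hAadjnorm
      exact absurd (hσpos b1) (not_lt.mpr hAadjnorm)
    -- A* vn ∈ Wᗮ
    have hAvWorth : (LinearMap.adjoint A) vn ∈ Wᗮ := by
      rw [Submodule.mem_orthogonal]
      intro w hw
      rw [real_inner_comm, LinearMap.adjoint_inner_left, real_inner_comm]
      exact Submodule.inner_right_of_mem_orthogonal (Submodule.mem_map_of_mem hw) hvnorthmem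
    set u : V := ‖(LinearMap.adjoint A) vn‖⁻¹ • (LinearMap.adjoint A) vn with hu
    refine ⟨u, Submodule.smul_mem _ _ hAvWorth, norm_smul_inv_norm hAvne, ?_⟩
    have key : ⟪(orthogonalProjection (Submodule.map A W)ᗮ (A u) : V), vn⟫
        = ‖(LinearMap.adjoint A) vn‖ := by
      have h1 : ⟪A u - (orthogonalProjection (Submodule.map A W)ᗮ (A u) : V), vn⟫ = 0 :=
        (Submodule.map A W)ᗮ.starProjection_inner_eq_zero (A u) vn hvnorthmem
      rw [inner_sub_left, sub_eq_zero] at h1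
      have hne : ‖(LinearMap.adjoint A) vn‖ ≠ 0 := norm_ne_zero_iff.mpr hAvne
      rw [← h1, real_inner_comm, ← LinearMap.adjoint_inner_left, hu,
        real_inner_smul_right, real_inner_self_eq_norm_sq, sq, inv_mul_cancel_left₀ hne]
    calc σ b1 ≤ ‖(LinearMap.adjoint A) vn‖ := hAadjnorm
      _ = ⟪(orthogonalProjection (Submodule.map A W)ᗮ (A u) : V), vn⟫ := key.symm
      _ ≤ ‖(orthogonalProjection (Submodule.map A W)ᗮ (A u) : V)‖ * ‖vn‖ :=
          real_inner_le_norm _ _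
      _ = ‖(orthogonalProjection (Submodule.map A W)ᗮ (A u) : V)‖ := by
          rw [hvnnorm, mul_one]
  -- upper bound at W0
  have upper : ∀ u : V, u ∈ W0ᗮ → ‖u‖ = 1 →
      ‖(orthogonalProjection (Submodule.map A W0)ᗮ (A u) : V)‖ ≤ σ b1 := by
    intro u humem hunorm
    have hcoord : ∀ i : Fin d, b ≤ i.1 → ⟪e i, u⟫ = 0 := by
      intro i hi
      have : e i ∈ W0 := by
        apply Submodule.subset_span
        refine ⟨⟨i.1 - b, by omega⟩, ?_⟩
        show e ⟨b + (i.1 - b), by omega⟩ = e i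
        exact congrArg e (Fin.ext (by simp; omega))
      exact Submodule.inner_right_of_mem_orthogonal this humem
    have hAu : ‖A u‖ ≤ σ b1 := by
      have hsq : ‖A u‖ ^ 2 ≤ σ b1 ^ 2 := by
        rw [aux_map_norm_sq e f A σ hSVD u]
        calc ∑ i, σ i ^ 2 * ⟪e i, u⟫ ^ 2 ≤ ∑ i, σ b1 ^ 2 * ⟪e i, u⟫ ^ 2 := by
              apply Finset.sum_le_sum
              intro i _
              rcases lt_or_ge i.1 b with hi | hi
              · have hle : σ i ≤ σ b1 := hσmono (by rw [Fin.le_def]; show i.1 ≤ b - 1; omega)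
                have h0 : (0:ℝ) ≤ σ i := (hσpos i).le
                have hsq2 : σ i ^ 2 ≤ σ b1 ^ 2 := by nlinarith
                exact mul_le_mul_of_nonneg_right hsq2 (sq_nonneg _)
              · rw [hcoord i hi]; ring_nf; exact le_refl _
          _ = σ b1 ^ 2 * ∑ i, ⟪e i, u⟫ ^ 2 := by rw [Finset.mul_sum]
          _ = σ b1 ^ 2 * ‖u‖ ^ 2 := by rw [aux_norm_sq e u]
          _ = σ b1 ^ 2 := by rw [hunorm]; ring
      nlinarith [norm_nonneg (A u), (hσpos b1).le]
    exact (aux_proj_norm_le _ _).trans hAu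
  -- nonempty unit vector in W0ᗮ
  have hW0unit : (e ⟨0, by omega⟩) ∈ W0ᗮ ∧ ‖e ⟨0, by omega⟩‖ = 1 := by
    constructor
    · apply aux_mem_orthogonal_span
      rintro y ⟨j, rfl⟩
      have := orthonormal_iff_ite.mp e.orthonormal ⟨b + j.1, by omega⟩ ⟨0, by omega⟩
      rw [this, if_neg (by intro h; have := Fin.mk.injEq _ _ _ _ ▸ h; omega)]
    · exact e.orthonormal.1 _
  haveI hNW : Nonempty {W : Submodule ℝ V // finrank ℝ W = d - b} := ⟨⟨W0, hW0rank⟩⟩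
  haveI hNu : Nonempty {u : V // u ∈ W0ᗮ ∧ ‖u‖ = 1} := ⟨⟨_, hW0unit⟩⟩
  apply le_antisymm
  · refine le_ciInf fun W => ?_
    obtain ⟨u, hu1, hu2, hu3⟩ := lower W.1 W.2
    have hbdd : BddAbove (Set.range fun u : {u : V // u ∈ (W.1)ᗮ ∧ ‖u‖ = 1} =>
        ‖(orthogonalProjection (Submodule.map A W.1)ᗮ (A u.1) : V)‖) := by
      refine ⟨‖LinearMap.toContinuousLinearMap A‖, ?_⟩
      rintro x ⟨⟨y, hy1, hy2⟩, rfl⟩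
      calc ‖(orthogonalProjection (Submodule.map A W.1)ᗮ (A y) : V)‖
          ≤ ‖A y‖ := aux_proj_norm_le _ _
        _ = ‖LinearMap.toContinuousLinearMap A y‖ := rfl
        _ ≤ ‖LinearMap.toContinuousLinearMap A‖ * ‖y‖ :=
            (LinearMap.toContinuousLinearMap A).le_opNorm y
        _ = ‖LinearMap.toContinuousLinearMap A‖ := by rw [hy2, mul_one]
    exact hu3.trans (le_ciSup hbdd (⟨u, hu1, hu2⟩ : {u : V // u ∈ (W.1)ᗮ ∧ ‖u‖ = 1}))
  · refine ciInf_le_of_le ?_ ⟨W0, hW0rank⟩ (ciSup_le fun u => upper u.1 u.2.1 u.2.2)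
    refine ⟨0, ?_⟩
    rintro x ⟨W, rfl⟩
    exact Real.iSup_nonneg fun u => norm_nonneg _
end

section
/- Let $E$ be a measurable space, $f : E \to \mathbb{R}$ a bounded measurable function with $\sup |f| = R$, and let $(X_n)_{n \ge 0}$ be a Markov chain on $E$ such that for every $x \in E$, $\mathbb{E}_x[f(X_1)] \le 0$. Then for every $\varepsilon \in (0, 1/2]$, setting $\gamma = \varepsilon/(1+R)^2$, we have for all $x \in E$ and all $n \ge 0$: $\mathbb{E}_x\left[\exp\left(\gamma \sum_{i=1}^{n} f(X_i)\right)\right] \le \exp(\gamma \varepsilon n)$. -/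
/-!
Since `γ R ≤ 1`, the bound `exp t ≤ 1 + t + t²` for `|t| ≤ 1` together with the drift condition
gives `𝔼ₓ[exp (γ f (X₁))] ≤ 1 + γ² R² ≤ 1 + γ ε ≤ exp (γ ε)` uniformly in `x`. Conditioning on the
first step (the recursion for `M`) then multiplies the bound by `exp (γ ε)` at every step.
-/

open MeasureTheory ProbabilityTheory

lemma Real.exp_le_one_add_add_sq {t : ℝ} (ht : |t| ≤ 1) : Real.exp t ≤ 1 + t + t ^ 2 := by
  linarith [(abs_le.mp (Real.abs_exp_sub_one_sub_id_le ht)).2]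

lemma integral_exp_le_one_add_integral_add_sq {Ω : Type*} [MeasurableSpace Ω] {μ : Measure Ω}
    [IsProbabilityMeasure μ] {g : Ω → ℝ} (hg : Measurable g) {c : ℝ} (hgc : ∀ ω, |g ω| ≤ c)
    (hc : c ≤ 1) :
    ∫ ω, Real.exp (g ω) ∂μ ≤ 1 + ∫ ω, g ω ∂μ + c ^ 2 := by
  have hg_int : Integrable g μ :=
    .of_bound hg.aestronglyMeasurable c (.of_forall hgc)
  have hexp_int : Integrable (fun ω ↦ Real.exp (g ω)) μ :=
    .of_bound hg.exp.aestronglyMeasurable (Real.exp c) <| .of_forall fun ω ↦ by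
      rw [Real.norm_eq_abs, Real.abs_exp]
      exact Real.exp_le_exp.mpr ((le_abs_self _).trans (hgc ω))
  have hsq_le : ∀ ω, g ω ^ 2 ≤ c ^ 2 := fun ω ↦
    sq_le_sq' (abs_le.mp (hgc ω)).1 (abs_le.mp (hgc ω)).2
  have h1g_int : Integrable (fun ω ↦ 1 + g ω) μ := (integrable_const 1).add hg_int
  calc ∫ ω, Real.exp (g ω) ∂μ ≤ ∫ ω, (1 + g ω + c ^ 2) ∂μ := by
        refine integral_mono hexp_int (h1g_int.add (integrable_const _)) fun ω ↦ ?_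
        linarith [Real.exp_le_one_add_add_sq ((hgc ω).trans hc), hsq_le ω]
    _ = 1 + ∫ ω, g ω ∂μ + c ^ 2 := by
        rw [integral_add h1g_int (integrable_const _), integral_add (integrable_const 1) hg_int]
        simp

lemma Kernel.nonneg_and_le_pow_of_integral_le {E : Type*} [MeasurableSpace E] (κ : Kernel E E)
    {g : E → ℝ} (hg0 : ∀ y, 0 ≤ g y) (hg_int : ∀ x, Integrable g (κ x)) {a : ℝ}
    (hga : ∀ x, ∫ y, g y ∂(κ x) ≤ a) (M : ℕ → E → ℝ) (hM0 : ∀ x, M 0 x = 1)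
    (hMrec : ∀ n x, M (n + 1) x = ∫ y, g y * M n y ∂(κ x)) :
    ∀ n x, 0 ≤ M n x ∧ M n x ≤ a ^ n := by
  intro n
  induction n with
  | zero => simp [hM0]
  | succ n ih =>
    intro x
    rw [hMrec]
    refine ⟨integral_nonneg fun y ↦ mul_nonneg (hg0 y) (ih y).1, ?_⟩
    calc ∫ y, g y * M n y ∂(κ x) ≤ ∫ y, g y * a ^ n ∂(κ x) :=
          integral_mono_of_nonneg (.of_forall fun y ↦ mul_nonneg (hg0 y) (ih y).1)
            ((hg_int x).mul_const _)
            (.of_forall fun y ↦ mul_le_mul_of_nonneg_left (ih y).2 (hg0 y))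
      _ = (∫ y, g y ∂(κ x)) * a ^ n := integral_mul_const _ _
      _ ≤ a * a ^ n := mul_le_mul_of_nonneg_right (hga x) ((ih x).1.trans (ih x).2)
      _ = a ^ (n + 1) := (pow_succ' a n).symm

/-- **Exponential moment bound for Markov chains with nonpositive drift.**
The Markov chain `(Xₙ)` on `E` is encoded by its transition kernel `κ` (a Markov
kernel), and `M n x = 𝔼ₓ[exp (γ * ∑_{i=1}^n f (X i))]` is encoded by its
defining recursion, which is a consequence of the Markov property:
`M 0 x = 1` and `M (n+1) x = ∫ exp (γ f y) * M n y ∂(κ x)`.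
If `|f| ≤ R` pointwise (with `R = sup |f|`), the drift condition
`𝔼ₓ[f (X₁)] ≤ 0` holds for all `x`, and `0 < ε ≤ 1/2`, `γ = ε / (1+R)²`, then
`M n x ≤ exp (γ ε n)` for all `x` and `n`. -/
theorem stmt2 {E : Type*} [MeasurableSpace E]
    (κ : Kernel E E) [IsMarkovKernel κ]
    (f : E → ℝ) (hf : Measurable f)
    (R : ℝ) (hR0 : 0 ≤ R) (hfR : ∀ x, |f x| ≤ R)
    (hdrift : ∀ x, ∫ y, f y ∂(κ x) ≤ 0)
    (ε γ : ℝ) (hε0 : 0 < ε) (hε : ε ≤ 1 / 2) (hγ : γ = ε / (1 + R) ^ 2)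
    (M : ℕ → E → ℝ)
    (hM0 : ∀ x, M 0 x = 1)
    (hMrec : ∀ n x, M (n + 1) x = ∫ y, Real.exp (γ * f y) * M n y ∂(κ x)) :
    ∀ (x : E) (n : ℕ), M n x ≤ Real.exp (γ * ε * n) := by
  have hγ0 : 0 < γ := hγ ▸ by positivity
  have hγR : γ * R ≤ 1 := by
    rw [hγ, div_mul_eq_mul_div, div_le_one (by positivity)]
    nlinarith
  have hγR_sq : (γ * R) ^ 2 ≤ γ * ε := by
    have : γ * R ^ 2 ≤ ε := by
      rw [hγ, div_mul_eq_mul_div, div_le_iff₀ (by positivity)]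
      nlinarith
    nlinarith
  have hγf : ∀ y, |γ * f y| ≤ γ * R := fun y ↦ by
    rw [abs_mul, abs_of_pos hγ0]
    exact mul_le_mul_of_nonneg_left (hfR y) hγ0.le
  have hstep : ∀ x, ∫ y, Real.exp (γ * f y) ∂(κ x) ≤ Real.exp (γ * ε) := fun x ↦ by
    have := integral_exp_le_one_add_integral_add_sq (μ := κ x) (hf.const_mul γ) hγf hγR
    rw [integral_const_mul] at this
    nlinarith [hdrift x, Real.add_one_le_exp (γ * ε)]
  have hexp_int : ∀ x, Integrable (fun y ↦ Real.exp (γ * f y)) (κ x) := fun x ↦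
    .of_bound (hf.const_mul γ).exp.aestronglyMeasurable (Real.exp 1) <| .of_forall fun y ↦ by
      rw [Real.norm_eq_abs, Real.abs_exp]
      exact Real.exp_le_exp.mpr ((le_abs_self _).trans ((hγf y).trans hγR))
  intro x n
  rw [mul_comm, Real.exp_nat_mul]
  exact (Kernel.nonneg_and_le_pow_of_integral_le κ (fun _ ↦ (Real.exp_pos _).le) hexp_int hstep
    M hM0 hMrec n x).2
end

section
/- Let $E$ be a measurable space, $f : E \to \mathbb{R}$ a bounded measurable function with $\sup|f| = R$, and let $(X_n)_{n\ge 0}$ be a Markov chain on $E$ such that $\mathbb{E}_x[f(X_1)] \le 0$ for every $x \in E$. Then for every $\varepsilon \in (0,1/2]$, setting $\gamma = \varepsilon/(1+R)^2$, we have for all $x \in E$ and $n \ge 0$: $\mathbb{P}_x\left(\sum_{i=1}^n f(X_i) \ge 2\varepsilon n\right) \le \exp(-\gamma\varepsilon n)$. -/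
/-!
A Chernoff argument. Since `|x| ≤ 1` gives `exp x ≤ 1 + x + x²`, the drift condition yields the
one-step exponential moment bound `𝔼_x[exp (γ f (X₁))] ≤ 1 + (γ R)² ≤ exp (γ ε)`. Iterating it
through the Markov recursion gives `ℙ_x(∑_{i ≤ n} f (X i) ≥ t) ≤ exp (γ ε n - γ t)`, which at
`t = 2 ε n` is the claim.
-/

open MeasureTheory ProbabilityTheory Real

theorem integral_exp_mul_le_exp_sq {Ω : Type*} [MeasurableSpace Ω] {μ : Measure Ω}
    [IsProbabilityMeasure μ] {f : Ω → ℝ} {R γ : ℝ} (hf : Measurable f)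
    (hfR : ∀ x, |f x| ≤ R) (hmean : ∫ x, f x ∂μ ≤ 0) (hγ : 0 ≤ γ) (hγR : γ * R ≤ 1) :
    ∫ x, exp (γ * f x) ∂μ ≤ exp ((γ * R) ^ 2) := by
  have hf_int : Integrable f μ :=
    .of_bound hf.aestronglyMeasurable R (ae_of_all _ fun x => hfR x)
  have hquad : ∀ x, exp (γ * f x) ≤ 1 + (γ * R) ^ 2 + γ * f x := by
    intro x
    have habs : |γ * f x| ≤ γ * R := by
      rw [abs_mul, abs_of_nonneg hγ]
      exact mul_le_mul_of_nonneg_left (hfR x) hγ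
    have hsq : (γ * f x) ^ 2 ≤ (γ * R) ^ 2 := sq_le_sq' (abs_le.1 habs).1 (abs_le.1 habs).2
    linarith [(abs_le.1 (abs_exp_sub_one_sub_id_le (habs.trans hγR))).2]
  calc ∫ x, exp (γ * f x) ∂μ
      ≤ ∫ x, (1 + (γ * R) ^ 2 + γ * f x) ∂μ :=
        integral_mono_of_nonneg (ae_of_all _ fun x => (exp_pos _).le)
          ((integrable_const _).add (hf_int.const_mul γ)) (ae_of_all _ hquad)
    _ = 1 + (γ * R) ^ 2 + γ * ∫ x, f x ∂μ := by
        rw [integral_add (integrable_const _) (hf_int.const_mul γ), integral_const_mul]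
        simp
    _ ≤ (γ * R) ^ 2 + 1 := by nlinarith
    _ ≤ exp ((γ * R) ^ 2) := add_one_le_exp _

section Tail

variable {E : Type*} [MeasurableSpace E] {κ : Kernel E E} {f : E → ℝ} {Q : ℕ → E → ℝ → ℝ}

theorem tail_nonneg (hQ0 : ∀ x t, Q 0 x t = if t ≤ 0 then 1 else 0)
    (hQrec : ∀ n x t, Q (n + 1) x t = ∫ y, Q n y (t - f y) ∂(κ x)) (n : ℕ) (x : E) (t : ℝ) :
    0 ≤ Q n x t := by
  induction n generalizing x t with
  | zero => rw [hQ0]; split_ifs <;> norm_num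
  | succ n ih => rw [hQrec]; exact integral_nonneg fun y => ih y _

theorem tail_le_exp (hQ0 : ∀ x t, Q 0 x t = if t ≤ 0 then 1 else 0)
    (hQrec : ∀ n x t, Q (n + 1) x t = ∫ y, Q n y (t - f y) ∂(κ x)) {γ c : ℝ} (hγ : 0 ≤ γ)
    (hint : ∀ x, Integrable (fun y => exp (γ * f y)) (κ x))
    (hmgf : ∀ x, ∫ y, exp (γ * f y) ∂(κ x) ≤ exp c) (n : ℕ) (x : E) (t : ℝ) :
    Q n x t ≤ exp (c * n - γ * t) := by
  induction n generalizing x t with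
  | zero =>
    rw [hQ0]
    split_ifs with ht
    · simpa using one_le_exp (by nlinarith : 0 ≤ -(γ * t))
    · positivity
  | succ n ih =>
    have hstep : ∀ y, Q n y (t - f y) ≤ exp (c * n - γ * t) * exp (γ * f y) := fun y =>
      (ih y _).trans_eq (by rw [← exp_add]; ring_nf)
    rw [hQrec]
    calc ∫ y, Q n y (t - f y) ∂(κ x)
        ≤ ∫ y, exp (c * n - γ * t) * exp (γ * f y) ∂(κ x) :=
          integral_mono_of_nonneg (ae_of_all _ fun y => tail_nonneg hQ0 hQrec n y _)
            ((hint x).const_mul _) (ae_of_all _ hstep)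
      _ = exp (c * n - γ * t) * ∫ y, exp (γ * f y) ∂(κ x) := integral_const_mul _ _
      _ ≤ exp (c * n - γ * t) * exp c := by gcongr; exact hmgf x
      _ = exp (c * (n + 1 : ℕ) - γ * t) := by rw [← exp_add]; push_cast; ring_nf

end Tail

/-- `Q n x t` stands for `ℙₓ(∑_{i=1}^n f (X i) ≥ t)`, encoded by the recursion that the Markov
property gives for it. -/
theorem stmt3 {E : Type*} [MeasurableSpace E]
    (κ : Kernel E E) [IsMarkovKernel κ]
    (f : E → ℝ) (hf : Measurable f)
    (R : ℝ) (hR0 : 0 ≤ R) (hfR : ∀ x, |f x| ≤ R)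
    (hdrift : ∀ x, ∫ y, f y ∂(κ x) ≤ 0)
    (ε γ : ℝ) (hε0 : 0 < ε) (hε : ε ≤ 1 / 2) (hγ : γ = ε / (1 + R) ^ 2)
    (Q : ℕ → E → ℝ → ℝ)
    (hQ0 : ∀ x t, Q 0 x t = if t ≤ 0 then 1 else 0)
    (hQrec : ∀ n x t, Q (n + 1) x t = ∫ y, Q n y (t - f y) ∂(κ x)) :
    ∀ (x : E) (n : ℕ), Q n x (2 * ε * n) ≤ Real.exp (-(γ * ε * n)) := by
  have hγ0 : 0 ≤ γ := hγ ▸ by positivity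
  have hγR : γ * R ≤ 1 := by
    rw [hγ, div_mul_eq_mul_div, div_le_one (by positivity)]
    nlinarith
  have hγR_sq : (γ * R) ^ 2 ≤ γ * ε := by
    have : γ * R ^ 2 ≤ ε := by
      rw [hγ, div_mul_eq_mul_div, div_le_iff₀ (by positivity)]
      nlinarith
    calc (γ * R) ^ 2 = γ * (γ * R ^ 2) := by ring
      _ ≤ γ * ε := by gcongr
  have hint : ∀ x, Integrable (fun y => exp (γ * f y)) (κ x) := fun x =>
    .of_bound (hf.const_mul γ).exp.aestronglyMeasurable (exp (γ * R)) (ae_of_all _ fun y => by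
      rw [norm_of_nonneg (exp_pos _).le, exp_le_exp]
      exact mul_le_mul_of_nonneg_left (le_of_abs_le (hfR y)) hγ0)
  have hmgf : ∀ x, ∫ y, exp (γ * f y) ∂(κ x) ≤ exp (γ * ε) := fun x =>
    (integral_exp_mul_le_exp_sq hf hfR (hdrift x) hγ0 hγR).trans (exp_le_exp.2 hγR_sq)
  intro x n
  calc Q n x (2 * ε * n) ≤ exp (γ * ε * n - γ * (2 * ε * n)) :=
        tail_le_exp hQ0 hQrec hγ0 hint hmgf n x _
    _ = exp (-(γ * ε * n)) := by ring_nf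
end

section
/- Let $g$ be an invertible linear map of a $d$-dimensional real inner product space $V$, let $W \subseteq V$ be a subspace of dimension $k \ge 1$, and let $e_W \in \Lambda^k V$ be a unit vector spanning $\Lambda^k W$. Then $\inf_{w \in W, \|w\|=1} \|g w\| \ge \|\Lambda^k g(e_W)\| / \|\Lambda^{k-1} g\|$, where $\|\Lambda^{k-1} g\|$ is the operator norm of the induced map on the $(k-1)$-st exterior power. -/
open scoped RealInnerProductSpace

/-- The wedge product `v 0 ∧ ⋯ ∧ v (k-1)` of a `k`-tuple of vectors, as an element of
the `k`-th exterior power `⋀[ℝ]^k V`. -/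
noncomputable def wedgeI {V : Type*} [NormedAddCommGroup V] [InnerProductSpace ℝ V]
    (k : ℕ) (v : Fin k → V) : ⋀[ℝ]^k V :=
  ⟨ExteriorAlgebra.ιMulti ℝ k v,
    ExteriorAlgebra.ιMulti_range ℝ k (Set.mem_range_self v)⟩


section Gram

variable {V : Type*} [NormedAddCommGroup V] [InnerProductSpace ℝ V] [FiniteDimensional ℝ V]

/-- The determinant of the cross-Gram matrix, as a function of the "row" family,
for a fixed "column" family, is an alternating map. -/
noncomputable def gramAlt {n : ℕ} (w : Fin n → V) : V [⋀^Fin n]→ₗ[ℝ] ℝ :=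
  (Matrix.detRowAlternating (R := ℝ) (n := Fin n)).compLinearMap
    (LinearMap.pi fun j => (innerₗ V).flip (w j))

lemma gramAlt_apply {n : ℕ} (w x : Fin n → V) :
    gramAlt w x = (Matrix.of fun i j => ⟪x i, w j⟫).det := rfl

lemma gramD_comm {n : ℕ} (x y : Fin n → V) :
    (Matrix.of fun i j => ⟪x i, y j⟫).det = (Matrix.of fun i j => ⟪y i, x j⟫).det := by
  rw [← Matrix.det_transpose]
  congr 1
  ext i j
  simp [Matrix.transpose_apply, real_inner_comm]

lemma gram_step {m : ℕ} (v : Fin (m + 1) → V) :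
    ∃ c, 0 ≤ c ∧ c ≤ ‖v 0‖ ^ 2 ∧
      (Matrix.of fun i j => ⟪v i, v j⟫).det =
        c * (Matrix.of fun i j : Fin m => ⟪v i.succ, v j.succ⟫).det := by
  classical
  set t : Fin m → V := fun i => v i.succ with ht
  set K : Submodule ℝ V := Submodule.span ℝ (Set.range t) with hK
  set p : V := (K.orthogonalProjectionOnto (v 0) : V) with hp
  set q : V := v 0 - p with hq
  have hpK : p ∈ K := SetLike.coe_mem _
  have hqK : ∀ x ∈ K, ⟪q, x⟫ = 0 := by
    intro x hx
    have := K.sub_starProjection_mem_orthogonal (v 0)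
    exact (Submodule.mem_orthogonal' K q).mp this x hx
  have hqt : ∀ j : Fin m, ⟪q, t j⟫ = 0 := fun j =>
    hqK _ (Submodule.subset_span (Set.mem_range_self j))
  have hpq : ⟪p, q⟫ = 0 := by
    rw [real_inner_comm]; exact hqK p hpK
  have hv0 : v 0 = p + q := by rw [hq]; abel
  refine ⟨‖q‖ ^ 2, sq_nonneg ‖q‖, ?_, ?_⟩
  · have : ‖v 0‖ ^ 2 = ‖p‖ ^ 2 + ‖q‖ ^ 2 := by
      rw [hv0, norm_add_sq_real, hpq]; ring
    nlinarith [sq_nonneg ‖p‖]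
  · -- step 1: replace rows
    have hcons : Fin.cons (v 0) t = v := by
      rw [ht]; exact Fin.cons_self_tail v
    have hdep : ¬ LinearIndependent ℝ (Fin.cons p t : Fin (m + 1) → V) := by
      intro h
      exact (linearIndependent_fin_cons (x := p) (v := t) |>.mp h).2 hpK
    have key1 : ∀ y : Fin (m + 1) → V,
        (Matrix.of fun i j => ⟪v i, y j⟫).det = (Matrix.of fun i j => ⟪(Fin.cons q t : Fin (m + 1) → V) i, y j⟫).det := by
      intro y
      have h := (gramAlt y).map_update_add (Fin.cons q t : Fin (m + 1) → V) 0 p q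
      simp only [Fin.update_cons_zero] at h
      have h2 : gramAlt y (Fin.cons p t : Fin (m + 1) → V) = 0 :=
        (gramAlt y).map_linearDependent _ hdep
      have h1 : gramAlt y v = gramAlt y (Fin.cons q t : Fin (m + 1) → V) := by
        rw [← hcons, hv0, h, h2, zero_add]
      exact h1
    have key2 :
        (Matrix.of fun i j => ⟪v i, v j⟫).det
          = (Matrix.of fun i j => ⟪(Fin.cons q t : Fin (m + 1) → V) i, (Fin.cons q t : Fin (m + 1) → V) j⟫).det := by
      calc (Matrix.of fun i j => ⟪v i, v j⟫).det
          = (Matrix.of fun i j => ⟪(Fin.cons q t : Fin (m + 1) → V) i, v j⟫).det := key1 v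
        _ = (Matrix.of fun i j => ⟪v i, (Fin.cons q t : Fin (m + 1) → V) j⟫).det := gramD_comm _ _
        _ = (Matrix.of fun i j => ⟪(Fin.cons q t : Fin (m + 1) → V) i, (Fin.cons q t : Fin (m + 1) → V) j⟫).det := key1 _
    rw [key2]
    -- step 2: expand the determinant along the first row
    rw [Matrix.det_succ_row_zero]
    rw [Finset.sum_eq_single 0]
    · simp only [Fin.val_zero, pow_zero, one_mul, Fin.succAbove_zero, Matrix.of_apply,
        Fin.cons_zero]
      rw [real_inner_self_eq_norm_sq]
      congr 1
    · intro j _ hj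
      rcases Fin.eq_succ_of_ne_zero hj with ⟨j', rfl⟩
      simp [hqt]
    · intro h
      exact absurd (Finset.mem_univ 0) h

lemma gram_det_nonneg : ∀ {m : ℕ} (v : Fin m → V),
    0 ≤ (Matrix.of fun i j => ⟪v i, v j⟫).det := by
  intro m
  induction m with
  | zero => intro v; simp [Matrix.det_fin_zero]
  | succ n ih =>
    intro v
    obtain ⟨c, hc0, _, heq⟩ := gram_step v
    rw [heq]
    exact mul_nonneg hc0 (ih _)

lemma gram_det_le {m : ℕ} (v : Fin (m + 1) → V) :
    (Matrix.of fun i j => ⟪v i, v j⟫).det ≤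
      ‖v 0‖ ^ 2 * (Matrix.of fun i j : Fin m => ⟪v i.succ, v j.succ⟫).det := by
  obtain ⟨c, _, hc, heq⟩ := gram_step v
  rw [heq]
  exact mul_le_mul_of_nonneg_right hc (gram_det_nonneg _)

end Gram

/-- **Lower bound on expansion along a subspace via exterior powers.**
Let `g` be an invertible linear map of a `d`-dimensional real inner product space `V`,
`W ⊆ V` a subspace of dimension `k ≥ 1`, and `e_W ∈ ⋀^k V` a unit vector spanning
`⋀^k W`. The exterior powers carry their canonical induced inner products (encoded by
the bilinear forms `Bk`, `Bkm1` with the Gram-determinant property, and associated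
norms `Nk`, `Nkm1`), and `gk`, `gkm1` denote the induced maps `⋀^k g`, `⋀^{k-1} g`;
the operator norm `‖⋀^{k-1} g‖` is the supremum of `‖⋀^{k-1} g (x)‖` over unit
vectors `x`. Then `inf_{w ∈ W, ‖w‖ = 1} ‖g w‖ ≥ ‖⋀^k g (e_W)‖ / ‖⋀^{k-1} g‖`. -/
theorem stmt7 {V : Type*} [NormedAddCommGroup V] [InnerProductSpace ℝ V]
    [FiniteDimensional ℝ V] {d k : ℕ} (hd : Module.finrank ℝ V = d) (hk : 1 ≤ k)
    (Bk : ↥(⋀[ℝ]^k V) →ₗ[ℝ] ↥(⋀[ℝ]^k V) →ₗ[ℝ] ℝ)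
    (Bkm1 : ↥(⋀[ℝ]^(k - 1) V) →ₗ[ℝ] ↥(⋀[ℝ]^(k - 1) V) →ₗ[ℝ] ℝ)
    (hBk : ∀ u v : Fin k → V,
      Bk (wedgeI k u) (wedgeI k v) = (Matrix.of fun i j => ⟪u i, v j⟫).det)
    (hBkm1 : ∀ u v : Fin (k - 1) → V,
      Bkm1 (wedgeI (k - 1) u) (wedgeI (k - 1) v) = (Matrix.of fun i j => ⟪u i, v j⟫).det)
    (Nk : ↥(⋀[ℝ]^k V) → ℝ) (hNk : ∀ x, Nk x = Real.sqrt (Bk x x))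
    (Nkm1 : ↥(⋀[ℝ]^(k - 1) V) → ℝ) (hNkm1 : ∀ x, Nkm1 x = Real.sqrt (Bkm1 x x))
    (g : V →ₗ[ℝ] V) (hg : Function.Bijective g)
    (gk : ↥(⋀[ℝ]^k V) →ₗ[ℝ] ↥(⋀[ℝ]^k V))
    (hgk : ∀ x : ↥(⋀[ℝ]^k V),
      (gk x : ExteriorAlgebra ℝ V) = ExteriorAlgebra.map g (x : ExteriorAlgebra ℝ V))
    (gkm1 : ↥(⋀[ℝ]^(k - 1) V) →ₗ[ℝ] ↥(⋀[ℝ]^(k - 1) V))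
    (hgkm1 : ∀ x : ↥(⋀[ℝ]^(k - 1) V),
      (gkm1 x : ExteriorAlgebra ℝ V) = ExteriorAlgebra.map g (x : ExteriorAlgebra ℝ V))
    (W : Submodule ℝ V) (hW : Module.finrank ℝ W = k)
    (eW : ↥(⋀[ℝ]^k V)) (heW : Nk eW = 1)
    (heWspan : Submodule.span ℝ {eW} =
      Submodule.span ℝ
        {x : ↥(⋀[ℝ]^k V) | ∃ v : Fin k → V, (∀ i, v i ∈ W) ∧ x = wedgeI k v}) :
    Nk (gk eW) / (⨆ x : {x : ↥(⋀[ℝ]^(k - 1) V) // Nkm1 x = 1}, Nkm1 (gkm1 x.1)) ≤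
      ⨅ w : {w : V // w ∈ W ∧ ‖w‖ = 1}, ‖g w.1‖ := by
  classical
  obtain ⟨m, rfl⟩ : ∃ m, k = m + 1 := ⟨k - 1, (Nat.succ_pred_eq_of_pos hk).symm⟩
  -- basic facts about the "norms"
  have hNk0 : ∀ x, 0 ≤ Nk x := fun x => (hNk x) ▸ Real.sqrt_nonneg _
  have hNksmul : ∀ (c : ℝ) x, Nk (c • x) = |c| * Nk x := by
    intro c x
    have hb : (Bk (c • x)) (c • x) = c ^ 2 * (Bk x) x := by
      simp only [map_smul, LinearMap.smul_apply, smul_eq_mul]; ring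
    rw [hNk, hNk, hb, Real.sqrt_mul (sq_nonneg c), Real.sqrt_sq_eq_abs]
  -- the induced maps on wedges
  have hmapk : ∀ u : Fin (m + 1) → V,
      gk (wedgeI (m + 1) u) = wedgeI (m + 1) (fun i => g (u i)) := by
    intro u
    apply Subtype.ext
    rw [hgk]
    exact ExteriorAlgebra.map_apply_ιMulti g u
  have hmapkm1 : ∀ u : Fin (m + 1 - 1) → V,
      gkm1 (wedgeI (m + 1 - 1) u) = wedgeI (m + 1 - 1) (fun i => g (u i)) := by
    intro u
    apply Subtype.ext
    rw [hgkm1]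
    exact ExteriorAlgebra.map_apply_ιMulti g u
  -- the unit sphere of `W` is nonempty
  have hWnt : Nontrivial W := Module.finrank_pos_iff.mp (by rw [hW]; omega)
  obtain ⟨x0, hx0⟩ := exists_ne (0 : W)
  have hx0' : (x0 : V) ≠ 0 := fun h => hx0 (Subtype.ext h)
  have hx0n : ‖(x0 : V)‖ ≠ 0 := norm_ne_zero_iff.mpr hx0'
  haveI hne : Nonempty {w : V // w ∈ W ∧ ‖w‖ = 1} := by
    refine ⟨⟨‖(x0 : V)‖⁻¹ • (x0 : V), W.smul_mem _ x0.2, ?_⟩⟩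
    rw [norm_smul, norm_inv, norm_norm, inv_mul_cancel₀ hx0n]
  have hInf0 : 0 ≤ ⨅ w : {w : V // w ∈ W ∧ ‖w‖ = 1}, ‖g w.1‖ :=
    Real.iInf_nonneg fun w => norm_nonneg _
  -- the key estimate for each unit vector of W
  have key : ∀ (w : V), w ∈ W → ‖w‖ = 1 →
      ∃ ω : ↥(⋀[ℝ]^(m + 1 - 1) V), Nkm1 ω = 1 ∧
        Nk (gk eW) ≤ ‖g w‖ * Nkm1 (gkm1 ω) := by
    intro w hwW hw1
    have hcard : Module.finrank ℝ W = Fintype.card (Fin (m + 1)) := by simp [hW]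
    have horth : Orthonormal ℝ
        (Set.restrict {(0 : Fin (m + 1))} fun _ => (⟨w, hwW⟩ : W)) := by
      refine ⟨fun i => ?_, fun i j hij => absurd (Subtype.ext (i.2.trans j.2.symm)) hij⟩
      show ‖(⟨w, hwW⟩ : W)‖ = 1
      rw [Submodule.coe_norm]
      exact hw1
    obtain ⟨b, hb⟩ :=
      horth.exists_orthonormalBasis_extension_of_card_eq hcard
    set u : Fin (m + 1) → V := fun i => (b i : V) with hu
    have hu0 : u 0 = w := by
      have := hb 0 rfl
      rw [hu]; simp only [this]
    have huW : ∀ i, u i ∈ W := fun i => (b i).2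
    have huon : Orthonormal ℝ u := by
      refine ⟨fun i => ?_, fun i j hij => ?_⟩
      · show ‖(b i : V)‖ = 1
        rw [← Submodule.coe_norm]
        exact b.orthonormal.1 i
      · show (inner ℝ (u i) (u j) : ℝ) = 0
        have h2 : (inner ℝ (u i) (u j) : ℝ) = inner ℝ (b i) (b j) :=
          (Submodule.coe_inner W (b i) (b j)).symm
        rw [h2]
        exact b.orthonormal.2 hij
    have hgram : (Matrix.of fun i j => ⟪u i, u j⟫) =
        (1 : Matrix (Fin (m + 1)) (Fin (m + 1)) ℝ) := by
      ext i j
      rw [Matrix.of_apply, orthonormal_iff_ite.mp huon i j, Matrix.one_apply]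
    have hNwedge : Nk (wedgeI (m + 1) u) = 1 := by
      rw [hNk, hBk, hgram, Matrix.det_one, Real.sqrt_one]
    have hmem : wedgeI (m + 1) u ∈ Submodule.span ℝ {eW} := by
      rw [heWspan]; exact Submodule.subset_span ⟨u, huW, rfl⟩
    obtain ⟨c, hc⟩ := Submodule.mem_span_singleton.mp hmem
    have habs : |c| = 1 := by
      have h := congrArg Nk hc
      rwa [hNksmul, heW, mul_one, hNwedge] at h
    have hc0 : c ≠ 0 := by
      intro h; rw [h] at habs; simp at habs
    have heW' : eW = c⁻¹ • wedgeI (m + 1) u := by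
      rw [← hc, smul_smul, inv_mul_cancel₀ hc0, one_smul]
    refine ⟨wedgeI (m + 1 - 1) (fun i : Fin (m + 1 - 1) => u i.succ), ?_, ?_⟩
    · have hon' : Orthonormal ℝ (fun i : Fin (m + 1 - 1) => u i.succ) :=
        huon.comp _ (Fin.succ_injective _)
      have hgram' : (Matrix.of fun i j : Fin (m + 1 - 1) => ⟪u i.succ, u j.succ⟫) =
          (1 : Matrix (Fin (m + 1 - 1)) (Fin (m + 1 - 1)) ℝ) := by
        ext i j
        rw [Matrix.of_apply, orthonormal_iff_ite.mp hon' i j, Matrix.one_apply]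
      rw [hNkm1, hBkm1, hgram', Matrix.det_one, Real.sqrt_one]
    · have hgkeW : Nk (gk eW) = Nk (wedgeI (m + 1) (fun i => g (u i))) := by
        rw [heW', map_smul, hNksmul, abs_inv, habs, inv_one, one_mul, hmapk]
      rw [hgkeW, hmapkm1, hNk, hBk, hNkm1, hBkm1]
      have h1 := gram_det_le (fun i => g (u i))
      rw [hu0] at h1
      calc Real.sqrt (Matrix.of fun i j => ⟪g (u i), g (u j)⟫).det
          ≤ Real.sqrt (‖g w‖ ^ 2 *
              (Matrix.of fun i j : Fin m => ⟪g (u i.succ), g (u j.succ)⟫).det) :=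
            Real.sqrt_le_sqrt h1
        _ = ‖g w‖ * Real.sqrt
              (Matrix.of fun i j : Fin m => ⟪g (u i.succ), g (u j.succ)⟫).det := by
            rw [Real.sqrt_mul (sq_nonneg _), Real.sqrt_sq (norm_nonneg _)]
        _ = ‖g w‖ * Real.sqrt
              (Matrix.of fun i j : Fin (m + 1 - 1) => ⟪g (u i.succ), g (u j.succ)⟫).det :=
            rfl
  -- assemble
  set S : ℝ := ⨆ x : {x : ↥(⋀[ℝ]^(m + 1 - 1) V) // Nkm1 x = 1}, Nkm1 (gkm1 x.1) with hS
  by_cases hbdd : BddAbove (Set.range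
      fun x : {x : ↥(⋀[ℝ]^(m + 1 - 1) V) // Nkm1 x = 1} => Nkm1 (gkm1 x.1))
  · rcases le_or_gt S 0 with hS0 | hSpos
    · exact le_trans (div_nonpos_iff.mpr (Or.inl ⟨hNk0 _, hS0⟩)) hInf0
    · refine le_ciInf fun w => ?_
      obtain ⟨ω, hω1, hωle⟩ := key w.1 w.2.1 w.2.2
      rw [div_le_iff₀ hSpos]
      calc Nk (gk eW) ≤ ‖g w.1‖ * Nkm1 (gkm1 ω) := hωle
        _ ≤ ‖g w.1‖ * S := by
            refine mul_le_mul_of_nonneg_left ?_ (norm_nonneg _)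
            exact le_ciSup hbdd (⟨ω, hω1⟩ : {x : ↥(⋀[ℝ]^(m + 1 - 1) V) // Nkm1 x = 1})
  · rw [hS, Real.iSup_of_not_bddAbove hbdd, div_zero]
    exact hInf0
end
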